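/- Let m, d, ħ > 0, v ∈ ℝ and t ∈ ℝ. The free Gaussian wave packet Ψ(r,t; m,v,d) = (2/π)^{1/4} · √(dm/(2d²m + itħ)) · exp(−d²m²(r−tv)²/(4d⁴m² + t²ħ²)) · exp(i(m t r² ħ² − 4d⁴m³ v(tv − 2r))/(8d⁴m²ħ + 2t²ħ³)) remains normalized for all times: ∫_ℝ |Ψ(r,t; m,v,d)|² dr = 1. -/

import Mathlib

open MeasureTheory

noncomputable section

/-- The free Gaussian wave packet `Ψ(r,t; m,v,d)` with reduced Planck constant `hbar`;
the square root is the principal branch. -/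
noncomputable def gaussPacket (hbar m v d : ℝ) (r t : ℝ) : ℂ :=
  (((2 / Real.pi) ^ ((1 : ℝ) / 4) : ℝ) : ℂ) *
    (((d * m : ℝ) : ℂ) / ((2 * d ^ 2 * m : ℝ) + Complex.I * t * hbar)) ^ ((1 : ℂ) / 2) *
    Complex.exp ((-(d ^ 2 * m ^ 2 * (r - t * v) ^ 2) /
      (4 * d ^ 4 * m ^ 2 + t ^ 2 * hbar ^ 2) : ℝ) : ℂ) *
    Complex.exp (Complex.I *
      (((m * t * r ^ 2 * hbar ^ 2 - 4 * d ^ 4 * m ^ 3 * v * (t * v - 2 * r)) /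
        (8 * d ^ 4 * m ^ 2 * hbar + 2 * t ^ 2 * hbar ^ 3) : ℝ) : ℂ))

/-!
The phase factor has modulus one, so `|Ψ(r,t)|²` is a real Gaussian in `r`. Collecting the
moduli of the prefactors shows that it is exactly the normal density with mean `t v` and
variance `σ(t)² = d² + (tħ/2md)²`, which integrates to one.
-/

open Real Complex NNReal ProbabilityTheory

lemma Complex.norm_cpow_one_half_sq (z : ℂ) : ‖z ^ (1 / 2 : ℂ)‖ ^ 2 = ‖z‖ := by
  rw [show (1 / 2 : ℂ) = ((1 / 2 : ℝ) : ℂ) by norm_num, norm_cpow_real,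
    ← Real.rpow_natCast, ← Real.rpow_mul (norm_nonneg z)]
  norm_num

lemma Real.rpow_one_fourth_sq {x : ℝ} (hx : 0 ≤ x) : (x ^ (1 / 4 : ℝ)) ^ 2 = √x := by
  rw [← Real.rpow_natCast, ← Real.rpow_mul hx, Real.sqrt_eq_rpow]
  norm_num

def gaussPacketVariance (hbar m d t : ℝ) : ℝ≥0 :=
  ⟨d ^ 2 + (t * hbar / (2 * m * d)) ^ 2, by positivity⟩

lemma coe_gaussPacketVariance (hbar m d t : ℝ) :
    (gaussPacketVariance hbar m d t : ℝ) = d ^ 2 + (t * hbar / (2 * m * d)) ^ 2 :=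
  rfl

lemma gaussPacketVariance_ne_zero {hbar m d : ℝ} (hd : d ≠ 0) (t : ℝ) :
    gaussPacketVariance hbar m d t ≠ 0 := by
  rw [← NNReal.coe_ne_zero, coe_gaussPacketVariance]
  positivity

theorem sq_norm_gaussPacket {hbar m d : ℝ} (hm : 0 < m) (hd : 0 < d) (v r t : ℝ) :
    ‖gaussPacket hbar m v d r t‖ ^ 2 =
      gaussianPDFReal (t * v) (gaussPacketVariance hbar m d t) r := by
  set D := 4 * d ^ 4 * m ^ 2 + t ^ 2 * hbar ^ 2 with hD
  have hD_pos : 0 < D := by positivity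
  have h_variance : (gaussPacketVariance hbar m d t : ℝ) = D / (4 * d ^ 2 * m ^ 2) := by
    rw [coe_gaussPacketVariance, hD]
    field_simp
    ring
  have h_norm_width : ‖((d * m : ℝ) : ℂ) / ((2 * d ^ 2 * m : ℝ) + I * t * hbar)‖ =
      d * m / √D := by
    rw [show I * t * hbar = ((t * hbar : ℝ) : ℂ) * I by push_cast; ring, norm_div,
      norm_add_mul_I, norm_real, Real.norm_of_nonneg (by positivity)]
    congr 2
    ring
  have h_amplitude : √(2 / π) * (d * m / √D) =
      (√(2 * π * gaussPacketVariance hbar m d t))⁻¹ := by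
    rw [h_variance, ← Real.sqrt_inv, ← Real.sqrt_sq (by positivity : 0 ≤ d * m),
      ← Real.sqrt_div' _ hD_pos.le, ← Real.sqrt_mul (by positivity)]
    congr 1
    field_simp
    ring
  have h_exponent : 2 * (-(d ^ 2 * m ^ 2 * (r - t * v) ^ 2) / D) =
      -(r - t * v) ^ 2 / (2 * gaussPacketVariance hbar m d t) := by
    rw [h_variance]
    field_simp
    ring
  rw [gaussPacket, norm_mul, norm_mul, norm_mul, norm_exp_I_mul_ofReal, mul_one, mul_pow,
    mul_pow, norm_cpow_one_half_sq, h_norm_width, norm_real,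
    Real.norm_of_nonneg (by positivity), Real.rpow_one_fourth_sq (by positivity),
    norm_exp_ofReal, ← Real.exp_nat_mul, Nat.cast_ofNat, h_exponent, h_amplitude,
    gaussianPDFReal]

theorem gaussPacket_normalized_general
    {hbar m d : ℝ} (hm : 0 < m) (hd : 0 < d) (v t : ℝ) :
    ∫ r : ℝ, ‖gaussPacket hbar m v d r t‖ ^ 2 = 1 := by
  simp_rw [sq_norm_gaussPacket hm hd]
  exact integral_gaussianPDFReal_eq_one _ (gaussPacketVariance_ne_zero hd.ne' t)

/-- The free Gaussian wave packet remains normalized for all times. -/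
theorem gaussPacket_normalized
    {hbar m d : ℝ} (hhbar : 0 < hbar) (hm : 0 < m) (hd : 0 < d) (v t : ℝ) :
    ∫ r : ℝ, ‖gaussPacket hbar m v d r t‖ ^ 2 = 1 :=
  gaussPacket_normalized_general hm hd v t
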